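/- Let Γ be a group, G = ℤ ≀ Γ, N = ⊕_Γ ℤ. Let Λ ≤ Γ be a subgroup, and assume x ∈ N satisfies: e_Γ ∈ supp(x), and for every subset S ⊆ supp(x) with e_Γ ∈ S and Σ_{s∈S} x(s) = 0, the subgroup generated by S contains Λ. Then cl_{G,N}(x) ≥ intrk^Γ(Λ), where intrk^Γ(Λ) = inf{rk(Θ) : Λ ≤ Θ ≤ Γ} (with the convention cl_{G,N}(x) = ∞ if x ∉ [G,N]). -/

import Mathlib

/-!
If `x = ∏ᵢ ⁅gᵢ, vᵢ⁆` with `vᵢ ∈ N`, let `Θ` be the subgroup generated by the `Γ`-components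
`γᵢ` of the `gᵢ`, so `rk Θ ≤ k`. Summing the coefficients of an element of `⊕_Γ ℤ` over `Θ`
is a homomorphism invariant under shifts by `Θ`, hence it kills every `⁅gᵢ, vᵢ⁆ = γᵢ • vᵢ - vᵢ`
and therefore `x`. So `S = supp x ∩ Θ` is an admissible set, whence `Λ ≤ ⟨S⟩ ≤ Θ`.
-/

open Finsupp
open scoped commutatorElement

variable (A : Type*) [AddCommGroup A] (Γ : Type*) [Group Γ]

/-- The shift action of `Γ` on `⊕_Γ A`: `(γ • u) x = u (γ⁻¹ * x)`. -/
noncomputable def shiftHom : Γ →* Multiplicative (AddAut (Γ →₀ A)) where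
  toFun γ := Multiplicative.ofAdd (Finsupp.domCongr (Equiv.mulLeft γ) : (Γ →₀ A) ≃+ (Γ →₀ A))
  map_one' := by
    apply Multiplicative.toAdd.injective; apply AddEquiv.ext; intro f; ext a
    simp [Finsupp.domCongr_apply, Finsupp.equivMapDomain_apply]
    rfl
  map_mul' γ γ' := by
    apply Multiplicative.toAdd.injective; apply AddEquiv.ext; intro f; ext a
    simp [AddAut.add_apply, Finsupp.domCongr_apply, Finsupp.equivMapDomain_apply, Equiv.Perm.mul_apply, mul_assoc]
    rfl

/-- The action of `Γ` on `Multiplicative (⊕_Γ A)` used to build the wreath product. -/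
noncomputable def wreathφ : Γ →* MulAut (Multiplicative (Γ →₀ A)) where
  toFun γ := AddEquiv.toMultiplicative (shiftHom A Γ γ).toAdd
  map_one' := by ext x; simp
  map_mul' γ γ' := by ext x; simp

/-- The restricted wreath product `A ≀ Γ = (⊕_Γ A) ⋊ Γ`. -/
noncomputable abbrev Wreath := SemidirectProduct (Multiplicative (Γ →₀ A)) Γ (wreathφ A Γ)

/-- The mixed commutator length `cl_{G,N}` (∞ if not a product of mixed commutators). -/
noncomputable def clGN {G : Type*} [Group G] (N : Subgroup G) (x : G) : ℕ∞ :=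
  sInf {n : ℕ∞ | ∃ k : ℕ, n = k ∧ ∃ g v : Fin k → G, (∀ i, v i ∈ N) ∧
    x = (List.ofFn fun i => ⁅g i, v i⁆).prod}

/-- The rank of a subgroup: minimal size of a generating set. -/
noncomputable def rk {G : Type*} [Group G] (H : Subgroup G) : ℕ∞ :=
  sInf {n : ℕ∞ | ∃ S : Finset G, Subgroup.closure (S : Set G) = H ∧ n = S.card}

/-- The intermediate rank `intrk^Γ(Λ) = inf {rk Θ | Λ ≤ Θ ≤ Γ}`. -/
noncomputable def intrk {G : Type*} [Group G] (Λ : Subgroup G) : ℕ∞ :=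
  sInf {n : ℕ∞ | ∃ Θ : Subgroup G, Λ ≤ Θ ∧ n = rk Θ}

/-- The general rank in the sense of Malcev. -/
noncomputable def genrk (G : Type*) [Group G] : ℕ∞ :=
  sSup {n : ℕ∞ | ∃ Λ : Subgroup G, Λ.FG ∧ n = intrk Λ}

/-- The special rank in the sense of Malcev. -/
noncomputable def sperk (G : Type*) [Group G] : ℕ∞ :=
  sSup {n : ℕ∞ | ∃ Λ : Subgroup G, Λ.FG ∧ n = rk Λ}

open SemidirectProduct in
theorem SemidirectProduct.commutatorElement_inl {N G : Type*} [CommGroup N] [Group G]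
    {φ : G →* MulAut N} (p : N ⋊[φ] G) (w : N) :
    ⁅p, (inl w : N ⋊[φ] G)⁆ = inl (φ p.right w * w⁻¹) := by
  ext
  · simp [commutatorElement_def, mul_assoc, mul_comm]
    rw [mul_left_comm, mul_inv_cancel_left]
  · simp [commutatorElement_def]

section SubgroupSum

variable {A Γ}

open Classical in
noncomputable def subgroupSum (Θ : Subgroup Γ) : (Γ →₀ A) →+ A :=
  Finsupp.liftAddHom fun a => if a ∈ Θ then AddMonoidHom.id A else 0

theorem subgroupSum_apply (Θ : Subgroup Γ) [DecidablePred (· ∈ Θ)] (u : Γ →₀ A) :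
    subgroupSum Θ u = ∑ a ∈ u.support with a ∈ Θ, u a := by
  rw [subgroupSum, Finsupp.liftAddHom_apply, Finsupp.sum, Finset.sum_filter]
  refine Finset.sum_congr rfl fun a _ => ?_
  split_ifs <;> simp_all

theorem subgroupSum_shift {Θ : Subgroup Γ} {γ : Γ} (hγ : γ ∈ Θ) (u : Γ →₀ A) :
    subgroupSum Θ ((shiftHom A Γ γ).toAdd u) = subgroupSum Θ u := by
  rw [subgroupSum, Finsupp.liftAddHom_apply, Finsupp.liftAddHom_apply]
  show (Finsupp.equivMapDomain (Equiv.mulLeft γ) u).sum _ = _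
  rw [Finsupp.sum_equivMapDomain]
  refine Finsupp.sum_congr fun a _ => ?_
  split_ifs <;> simp_all [Subgroup.mul_mem_cancel_left _ hγ]

theorem subgroupSum_eq_zero_of_eq_prod_commutator {Θ : Subgroup Γ} {k : ℕ}
    {g v : Fin k → Wreath A Γ} (hg : ∀ i, (g i).right ∈ Θ)
    (hv : ∀ i, v i ∈ (SemidirectProduct.inl : Multiplicative (Γ →₀ A) →* Wreath A Γ).range)
    {x : Γ →₀ A} (hx : SemidirectProduct.inl (Multiplicative.ofAdd x) =
      (List.ofFn fun i => ⁅g i, v i⁆).prod) :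
    subgroupSum Θ x = 0 := by
  let K : Subgroup (Wreath A Γ) :=
    (AddMonoidHom.toMultiplicative (subgroupSum Θ)).ker.map SemidirectProduct.inl
  have hcomm : ∀ i, ⁅g i, v i⁆ ∈ K := by
    intro i
    obtain ⟨w, hw⟩ := hv i
    rw [← hw, SemidirectProduct.commutatorElement_inl]
    refine Subgroup.mem_map_of_mem _ ?_
    rw [MonoidHom.mem_ker, AddMonoidHom.coe_toMultiplicative, Function.comp_apply,
      Function.comp_apply, ofAdd_eq_one, toAdd_mul, toAdd_inv, ← sub_eq_add_neg, map_sub]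
    exact sub_eq_zero.mpr (subgroupSum_shift (hg i) _)
  have hxK : SemidirectProduct.inl (Multiplicative.ofAdd x) ∈ K :=
    hx ▸ K.list_prod_mem (by simpa [List.mem_ofFn] using hcomm)
  rw [Subgroup.mem_map_iff_mem SemidirectProduct.inl_injective, MonoidHom.mem_ker] at hxK
  exact ofAdd_eq_one.mp hxK

end SubgroupSum

section Rank

variable {G : Type*} [Group G]

theorem le_clGN_of_forall {N : Subgroup G} {x : G} {n : ℕ∞}
    (h : ∀ (k : ℕ) (g v : Fin k → G), (∀ i, v i ∈ N) →
      x = (List.ofFn fun i => ⁅g i, v i⁆).prod → n ≤ k) :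
    n ≤ clGN N x :=
  le_sInf fun _ ⟨k, hk, g, v, hv, hx⟩ => hk ▸ h k g v hv hx

theorem rk_closure_le_card (S : Finset G) : rk (Subgroup.closure (S : Set G)) ≤ S.card :=
  sInf_le ⟨S, rfl, rfl⟩

theorem intrk_le_rk {Λ Θ : Subgroup G} (h : Λ ≤ Θ) : intrk Λ ≤ rk Θ :=
  sInf_le ⟨Θ, h, rfl⟩

end Rank

/-- lower bound for the mixed commutator length in `ℤ ≀ Γ`
in terms of the intermediate rank. -/
theorem intrk_le_clGN {Γ : Type*} [Group Γ] (Λ : Subgroup Γ) (x : Γ →₀ ℤ)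
    (h1 : (1 : Γ) ∈ x.support)
    (hzs : ∀ S : Finset Γ, (S : Set Γ) ⊆ (x.support : Set Γ) → (1 : Γ) ∈ S →
      (∑ s ∈ S, x s = 0) → Λ ≤ Subgroup.closure (S : Set Γ)) :
    intrk Λ ≤ clGN (SemidirectProduct.inl : Multiplicative (Γ →₀ ℤ) →* Wreath ℤ Γ).range
      (SemidirectProduct.inl (Multiplicative.ofAdd x)) := by
  classical
  refine le_clGN_of_forall fun k g v hv hx => ?_
  set T : Finset Γ := Finset.univ.image fun i => (g i).right
  set Θ := Subgroup.closure (T : Set Γ)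
  have hgΘ : ∀ i, (g i).right ∈ Θ := fun i => Subgroup.subset_closure (by simp [T])
  have hsum : ∑ s ∈ x.support with s ∈ Θ, x s = 0 := by
    rw [← subgroupSum_apply]
    exact subgroupSum_eq_zero_of_eq_prod_commutator hgΘ hv hx
  have hΛ : Λ ≤ Θ :=
    (hzs _ (Finset.coe_subset.mpr (Finset.filter_subset _ _))
      (Finset.mem_filter.mpr ⟨h1, Θ.one_mem⟩) hsum).trans
      ((Subgroup.closure_le Θ).mpr fun _ ha => (Finset.mem_filter.mp ha).2)
  calc intrk Λ ≤ rk Θ := intrk_le_rk hΛ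
    _ ≤ T.card := rk_closure_le_card T
    _ ≤ k := by exact_mod_cast Finset.card_image_le.trans (by simp)
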